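/- Let n≥3. Then for every 0<i<2^{n+1} there exists u with 0<u<2^{n+2} and u≠2^{n+1} such that the u-th term of the sequence (σ^i((ε_n 𝜀̄_n)^∞),(ε_n (𝜀̄_n)^+ 𝜀̄_n ε_n)^∞) belongs to {(1,1),(−1,−1)}. -/

import Mathlib

open scoped Pointwise ENNReal
open Filter

noncomputable section

/-- The digit set Ω₁ = {(0,0),(0,1),(1,0)} ⊆ ℝ². -/
def Omega1 : Set (ℝ × ℝ) := {((0:ℝ), (0:ℝ)), (0, 1), (1, 0)}

/-- The digit set Ω₂ = Ω₁ − Ω₁ ⊆ ℝ². -/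
def Omega2 : Set (ℝ × ℝ) :=
  {((0:ℝ), (0:ℝ)), (0, 1), (1, 0), (-1, 0), (-1, 1), (0, -1), (1, -1)}

/-- The Sierpinski gasket in base `q`. -/
def gasket (q : ℝ) : Set (ℝ × ℝ) :=
  {x | ∃ c : ℕ → ℝ × ℝ, (∀ i, c i ∈ Omega1) ∧ x = ∑' i, (q ^ (i + 1))⁻¹ • c i}

/-- `U_q`: points of `[-1/(q-1), 1/(q-1)]` having a unique `q`-expansion over `{-1,0,1}`. -/
def uniqSet (q : ℝ) : Set ℝ :=
  {s | s ∈ Set.Icc (-(1 / (q - 1))) (1 / (q - 1)) ∧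
    ∃! t : ℕ → ℝ, (∀ i, t i ∈ ({-1, 0, 1} : Set ℝ)) ∧ s = ∑' i, t i / q ^ (i + 1)}

/-- The set `T`. -/
def Tset (q : ℝ) : Set (ℝ × ℝ) :=
  {t | t ∈ gasket q - gasket q ∧ t.1 ∈ uniqSet q ∧ t.2 ∈ uniqSet q}

/-- The set `D_q` of Hausdorff dimensions of intersections. -/
def Dset (q : ℝ) : Set ℝ≥0∞ :=
  {d | ∃ t ∈ Tset q, d = dimH (gasket q ∩ ((· + t) '' gasket q))}

/-- The words `w_n` over `{0,1,2}`: `klWord 0 = w₁ = 2`,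
`w_{n+1} = (w_n ⟨reflection of w_n⟩)⁺`. -/
def klWord : ℕ → List ℕ
  | 0 => [2]
  | n + 1 =>
    let w := klWord n ++ (klWord n).map (fun x => 2 - x)
    w.dropLast ++ [w.getLast?.getD 0 + 1]

/-- `isKLBase n p`: `p ∈ (2,3)` and `1` has (greedy) expansion `w_n 0^∞` in base `p`
w.r.t. `{0,1,2}`, i.e. `p = q_n`. -/
def isKLBase (n : ℕ) (p : ℝ) : Prop :=
  p ∈ Set.Ioo (2 : ℝ) 3 ∧
    (1 : ℝ) = ∑ i ∈ Finset.range (klWord (n - 1)).length,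
      ((klWord (n - 1)).getD i 0 : ℝ) / p ^ (i + 1)

/-- `1` has a unique expansion in base `p` w.r.t. the digit set `{0,1,2}`. -/
def uniqueOneExp (p : ℝ) : Prop :=
  ∃! c : ℕ → ℕ, (∀ i, c i ≤ 2) ∧ (1 : ℝ) = ∑' i, (c i : ℝ) / p ^ (i + 1)

/-- The Thue–Morse sequence. -/
def tm : ℕ → ℕ
  | 0 => 0
  | n + 1 => if (n + 1) % 2 = 0 then tm ((n + 1) / 2) else 1 - tm ((n + 1) / 2)
decreasing_by all_goals omega

/-- `λ_i = τ_i − τ_{i−1}` (for `i ≥ 1`). -/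
def lam (i : ℕ) : ℤ := (tm i : ℤ) - (tm (i - 1) : ℤ)

/-- The word `ε_n = λ₁ ⋯ λ_{2^n}`. -/
def eps (n : ℕ) : List ℤ := (List.range (2 ^ n)).map fun i => lam (i + 1)

/-- Reflection of a word over `{-1,0,1}`: each digit `x` is replaced by `-x`. -/
def reflect (w : List ℤ) : List ℤ := w.map fun x => -x

/-- `w⁺`: the last digit is increased by `1`. -/
def plusOne (w : List ℤ) : List ℤ := w.dropLast ++ [w.getLast?.getD 0 + 1]

/-- `w⁻`: the last digit is decreased by `1`. -/
def minusOne (w : List ℤ) : List ℤ := w.dropLast ++ [w.getLast?.getD 0 - 1]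

/-- The periodic sequence `w^∞` (the `(j+1)`-st term is `per w j`). -/
def per (w : List ℤ) : ℕ → ℤ := fun j => w.getD (j % w.length) 0

/-- `EndsWith x s`: the sequence `x` ends with (has tail) the sequence `s`. -/
def EndsWith {α : Type*} (x s : ℕ → α) : Prop := ∃ k, ∀ j, x (j + k) = s j

/-- The digit set Ω₂ as a subset of ℤ × ℤ. -/
def Omega2Z : Set (ℤ × ℤ) :=
  {((0:ℤ), (0:ℤ)), (0, 1), (1, 0), (-1, 0), (-1, 1), (0, -1), (1, -1)}

/-- `E_{n,m}^i = (σ^i((ε_n ε̄_n)^∞), (ε_m ε̄_m)^∞)` (the `(j+1)`-st term is `Eseq n m i j`). -/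
def Eseq (n m i : ℕ) : ℕ → ℤ × ℤ := fun j =>
  (per (eps n ++ reflect (eps n)) (j + i), per (eps m ++ reflect (eps m)) j)


/-- `A_k = a₁ ⋯ a_{2^k}` where `a_i = λ_{2i−1}`. -/
def Aword (k : ℕ) : List ℤ := (List.range (2 ^ k)).map fun i => lam (2 * i + 1)

/-- `D_{k,k}^i = (σ^i((A_k Ā_k)^∞), (A_k Ā_k)^∞)`. -/
def Dseq (k i : ℕ) : ℕ → ℤ × ℤ := fun j =>
  (per (Aword k ++ reflect (Aword k)) (j + i), per (Aword k ++ reflect (Aword k)) j)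

/-- `U_q'`: the set of sequences over `{-1,0,1}` which are the unique `q`-expansion
of the number they represent. -/
def uniqSeqSet (q : ℝ) : Set (ℕ → ℤ) :=
  {t | (∀ i, t i ∈ ({-1, 0, 1} : Set ℤ)) ∧
    ∀ s : ℕ → ℤ, (∀ i, s i ∈ ({-1, 0, 1} : Set ℤ)) →
      (∑' i, (s i : ℝ) / q ^ (i + 1)) = (∑' i, (t i : ℝ) / q ^ (i + 1)) → s = t}

/-- `ε_{n-1} ε̄_{n-1}`, with the convention `ε_{-1} ε̄_{-1} := 00`. -/
def epsPair : ℕ → List ℤ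
  | 0 => [0, 0]
  | n + 1 => eps n ++ reflect (eps n)

/-- The finite prefix
`(ε_0 ε̄_0)^{j_0} (ε_0 ε̄_1)^{l_0} ⋯ (ε_{M-1} ε̄_{M-1})^{j_{M-1}} (ε_{M-1} ε̄_M)^{l_{M-1}}`. -/
def blockJL (j l : ℕ → ℕ) : ℕ → List ℤ
  | 0 => []
  | M + 1 => blockJL j l M
      ++ (List.replicate (j M) (eps M ++ reflect (eps M))).flatten
      ++ (List.replicate (l M) (eps M ++ reflect (eps (M + 1)))).flatten

/-- The tail of `t` starting at some position `k` follows the pattern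
`(ε_0 ε̄_0)^{j_0}(ε_0 ε̄_1)^{l_0}(ε_1 ε̄_1)^{j_1}(ε_1 ε̄_2)^{l_1}⋯`. -/
def TailFollows (t : ℕ → ℤ) (j l : ℕ → ℕ) : Prop :=
  ∃ k, ∀ M, ∀ i < (blockJL j l M).length, t (i + k) = (blockJL j l M).getD i 0

/-- As `TailFollows`, but for the reflection of the pattern. -/
def TailFollowsRefl (t : ℕ → ℤ) (j l : ℕ → ℕ) : Prop :=
  ∃ k, ∀ M, ∀ i < (blockJL j l M).length, t (i + k) = -(blockJL j l M).getD i 0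

/-- `a_n = 0 λ₁ ⋯ λ_{2^n−1}`. -/
def aword (n : ℕ) : List ℤ := 0 :: ((List.range (2 ^ n - 1)).map fun i => lam (i + 1))

/-- `b_n = (−1) λ₁ ⋯ λ_{2^n−1}`. -/
def bword (n : ℕ) : List ℤ := (-1) :: ((List.range (2 ^ n - 1)).map fun i => lam (i + 1))

/-- The transitions allowed by the matrix `A` on the alphabet `{a_n, b_n, ā_n, b̄_n}`:
`a→b, a→ā, b→ā, ā→a, ā→b̄, b̄→a`. -/
def allowedTrans (n : ℕ) (u v : List ℤ) : Prop :=
  (u = aword n ∧ (v = bword n ∨ v = reflect (aword n))) ∨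
  (u = bword n ∧ v = reflect (aword n)) ∨
  (u = reflect (aword n) ∧ (v = aword n ∨ v = reflect (bword n))) ∨
  (u = reflect (bword n) ∧ v = aword n)


/-!
Write `W = ε_n ε̄_n` and `W' = ε_n (ε̄_n)⁺ ε̄_n ε_n`. The second word agrees with `W` on its first
`2^{n+1} - 1` letters and with `W̄` on its second half, while `W^∞` has period `2^{n+1}`. Hence, if
the letters of `W^∞` at (0-based) positions `m + i` and `m`, with `m + 1 < 2^{n+1}`, are both `±1`,
then `(σ^i W^∞, W'^∞)` carries `(1,1)` or `(−1,−1)` at position `m` or at position `2^{n+1} + m`.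
The even positions of `W` carry `±λ_{2t+1} = ±(1 − 2τ_t) = ±1`, and `λ₄ = 1`; so `m = 0` works for
even `i`, and an even `m` with `m + i ≡ 3 (mod 2^{n+1})` for odd `i`.
-/

lemma tm_two_mul (t : ℕ) : tm (2 * t) = tm t := by
  cases t with
  | zero => rfl
  | succ t =>
    rw [show 2 * (t + 1) = 2 * t + 1 + 1 by ring, tm]
    simp only [show (2 * t + 1 + 1) % 2 = 0 by omega, show (2 * t + 1 + 1) / 2 = t + 1 by omega,
      if_true]

lemma tm_two_mul_add_one (t : ℕ) : tm (2 * t + 1) = 1 - tm t := by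
  rw [tm]
  simp only [show (2 * t + 1) % 2 = 1 by omega, show (2 * t + 1) / 2 = t by omega]
  rfl

lemma tm_le_one (n : ℕ) : tm n ≤ 1 := by
  induction n using Nat.strong_induction_on with
  | _ n ih =>
    cases n with
    | zero => simp [tm]
    | succ n =>
      rw [tm]
      split
      · exact ih _ (by omega)
      · omega

lemma lam_two_mul_add_one (t : ℕ) : lam (2 * t + 1) = 1 - 2 * tm t := by
  have h := tm_le_one t
  rw [lam, Nat.add_sub_cancel, tm_two_mul, tm_two_mul_add_one]
  omega

lemma isUnit_lam_of_odd {j : ℕ} (hj : Odd j) : IsUnit (lam j) := by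
  obtain ⟨t, rfl⟩ := hj
  rw [lam_two_mul_add_one, Int.isUnit_iff]
  rcases Nat.le_one_iff_eq_zero_or_eq_one.mp (tm_le_one t) with h | h <;> simp [h]

lemma lam_four : lam 4 = 1 := by
  have h4 : tm 4 = 1 := by
    rw [show 4 = 2 * (2 * 1) by rfl, tm_two_mul, tm_two_mul, show 1 = 2 * 0 + 1 by rfl,
      tm_two_mul_add_one, tm]
  have h3 : tm 3 = 0 := by
    rw [show 3 = 2 * (2 * 0 + 1) + 1 by rfl, tm_two_mul_add_one, tm_two_mul_add_one, tm]
  simp [lam, h4, h3]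

lemma per_of_lt {w : List ℤ} {j : ℕ} (h : j < w.length) : per w j = w.getD j 0 := by
  rw [per, Nat.mod_eq_of_lt h]

lemma per_add_length (w : List ℤ) (j : ℕ) : per w (j + w.length) = per w j := by
  simp [per]

lemma per_add_mod_length (w : List ℤ) (j i : ℕ) : per w (j + i % w.length) = per w (j + i) := by
  simp [per, Nat.add_mod]

lemma reflect_length (w : List ℤ) : (reflect w).length = w.length :=
  List.length_map _

lemma reflect_getD (w : List ℤ) (j : ℕ) : (reflect w).getD j 0 = -w.getD j 0 := by
  have h := List.getD_map w 0 (n := j) (fun x : ℤ => -x)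
  rwa [neg_zero] at h

lemma reflect_reflect (w : List ℤ) : reflect (reflect w) = w := by
  simp [reflect]

lemma reflect_append (v w : List ℤ) : reflect (v ++ w) = reflect v ++ reflect w :=
  List.map_append

lemma plusOne_length {w : List ℤ} (hw : w ≠ []) : (plusOne w).length = w.length := by
  have := List.length_pos_iff.mpr hw
  simp only [plusOne, List.length_append, List.length_dropLast, List.length_singleton]
  omega

lemma getD_append_plusOne_append {v w : List ℤ} (x : List ℤ) {j : ℕ}
    (h : j + 1 < v.length + w.length) :
    (v ++ plusOne w ++ x).getD j 0 = (v ++ w).getD j 0 := by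
  have hj : j < (v ++ w.dropLast).length := by
    simp only [List.length_append, List.length_dropLast]
    omega
  have hlhs : v ++ plusOne w ++ x = (v ++ w.dropLast) ++ ([w.getLast?.getD 0 + 1] ++ x) := by
    simp [plusOne]
  have hrhs : v ++ w = (v ++ w.dropLast) ++ w.drop (w.length - 1) := by
    rw [List.append_assoc, List.dropLast_eq_take, List.take_append_drop]
  rw [hlhs, hrhs, List.getD_append _ _ _ _ hj, List.getD_append _ _ _ _ hj]

lemma getD_append_plusOne_append_add {v w : List ℤ} (x : List ℤ) (hw : w ≠ []) (m : ℕ) :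
    (v ++ plusOne w ++ x).getD (v.length + w.length + m) 0 = x.getD m 0 := by
  rw [List.getD_append_right _ _ _ _ (by simp [plusOne_length hw])]
  simp [plusOne_length hw]

lemma eps_length (n : ℕ) : (eps n).length = 2 ^ n := by
  simp [eps]

lemma eps_getD {n j : ℕ} (h : j < 2 ^ n) : (eps n).getD j 0 = lam (j + 1) := by
  rw [eps, List.getD_eq_getElem _ _ (by simpa using h)]
  simp

lemma eps_append_reflect_length (n : ℕ) : (eps n ++ reflect (eps n)).length = 2 ^ (n + 1) := by
  rw [List.length_append, reflect_length, eps_length, pow_succ, mul_two]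

lemma per_eps_append_reflect_of_lt {n j : ℕ} (h : j < 2 ^ n) :
    per (eps n ++ reflect (eps n)) j = lam (j + 1) := by
  rw [per_of_lt (by rw [eps_append_reflect_length, pow_succ]; omega),
    List.getD_append _ _ _ _ (by rwa [eps_length]), eps_getD h]

lemma isUnit_per_eps_append_reflect_of_even {n k : ℕ} (hn : 1 ≤ n) (hk : Even k) :
    IsUnit (per (eps n ++ reflect (eps n)) k) := by
  have hP : Even (2 ^ n) := (Nat.even_pow' (by omega)).mpr even_two
  set r := k % 2 ^ (n + 1) with hr
  have hr_lt : r < 2 ^ (n + 1) := Nat.mod_lt _ (by positivity)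
  have hr_even : Even r := by
    rw [hr, Nat.even_iff, Nat.mod_mod_of_dvd _ (dvd_pow_self 2 n.succ_ne_zero)]
    exact Nat.even_iff.mp hk
  have hper : per (eps n ++ reflect (eps n)) k = (eps n ++ reflect (eps n)).getD r 0 := by
    rw [per, eps_append_reflect_length]
  rw [hper]
  rcases lt_or_ge r (2 ^ n) with hlo | hhi
  · rw [List.getD_append _ _ _ _ (by rwa [eps_length]), eps_getD hlo]
    exact isUnit_lam_of_odd hr_even.add_one
  · have hr' : Even (r - 2 ^ n) := (Nat.even_sub hhi).mpr (iff_of_true hr_even hP)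
    rw [List.getD_append_right _ _ _ _ (by rwa [eps_length]), reflect_getD, eps_length,
      eps_getD (by rw [pow_succ] at hr_lt; omega), IsUnit.neg_iff]
    exact isUnit_lam_of_odd hr'.add_one

lemma per_eps_append_plusOne_of_lt {n m : ℕ} (h : m + 1 < 2 ^ (n + 1)) :
    per (eps n ++ plusOne (reflect (eps n)) ++ reflect (eps n) ++ eps n) m =
      per (eps n ++ reflect (eps n)) m := by
  have hlen : m + 1 < (eps n).length + (reflect (eps n)).length := by
    rwa [reflect_length, eps_length, ← mul_two, ← pow_succ]
  rw [per_of_lt (by simp only [← eps_append_reflect_length, List.length_append] at h ⊢; omega),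
    per_of_lt (by rw [eps_append_reflect_length]; omega), List.append_assoc _ (reflect _),
    getD_append_plusOne_append _ hlen]

lemma per_eps_append_plusOne_add {n m : ℕ} (h : m < 2 ^ (n + 1)) :
    per (eps n ++ plusOne (reflect (eps n)) ++ reflect (eps n) ++ eps n) (2 ^ (n + 1) + m) =
      -per (eps n ++ reflect (eps n)) m := by
  have hne : reflect (eps n) ≠ [] := by
    rw [← List.length_pos_iff, reflect_length, eps_length]
    positivity
  have hlen : (eps n).length + (reflect (eps n)).length = 2 ^ (n + 1) := by
    rw [← List.length_append, eps_append_reflect_length]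
  rw [per_of_lt (by simp only [List.length_append, plusOne_length hne, reflect_length,
      eps_length, pow_succ] at h ⊢; omega), per_of_lt (by rwa [eps_append_reflect_length]),
    List.append_assoc _ (reflect _), ← hlen, getD_append_plusOne_append_add _ hne,
    ← reflect_getD, reflect_append, reflect_reflect]

lemma pair_self_mem_of_isUnit {a : ℤ} (ha : IsUnit a) :
    (a, a) ∈ ({(1, 1), (-1, -1)} : Set (ℤ × ℤ)) := by
  rcases Int.isUnit_iff.mp ha with rfl | rfl <;> simp

lemma exists_diag_of_isUnit {n i m : ℕ} (hm : m + 1 < 2 ^ (n + 1))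
    (hfst : IsUnit (per (eps n ++ reflect (eps n)) (m + i)))
    (hsnd : IsUnit (per (eps n ++ reflect (eps n)) m)) :
    ∃ u, 0 < u ∧ u < 2 ^ (n + 2) ∧ u ≠ 2 ^ (n + 1) ∧
      (per (eps n ++ reflect (eps n)) ((u - 1) + i),
        per (eps n ++ plusOne (reflect (eps n)) ++ reflect (eps n) ++ eps n)
          (u - 1)) ∈ ({(1, 1), (-1, -1)} : Set (ℤ × ℤ)) := by
  have hP : 2 ^ (n + 2) = 2 * 2 ^ (n + 1) := by ring
  rcases Int.isUnit_eq_or_eq_neg hsnd hfst with h | h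
  · refine ⟨m + 1, by omega, by omega, by omega, ?_⟩
    rw [Nat.add_sub_cancel, per_eps_append_plusOne_of_lt hm, h]
    exact pair_self_mem_of_isUnit hfst
  · refine ⟨2 ^ (n + 1) + m + 1, by omega, by omega, by omega, ?_⟩
    rw [Nat.add_sub_cancel, per_eps_append_plusOne_add (by omega), h, neg_neg,
      add_comm (2 ^ (n + 1)) m, add_right_comm, ← eps_append_reflect_length n, per_add_length]
    exact pair_self_mem_of_isUnit hfst

lemma exists_isUnit_per_eps_append_reflect {n : ℕ} (hn : 2 ≤ n) (i : ℕ) :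
    ∃ m, m + 1 < 2 ^ (n + 1) ∧ IsUnit (per (eps n ++ reflect (eps n)) (m + i)) ∧
      IsUnit (per (eps n ++ reflect (eps n)) m) := by
  have h4 : 4 ≤ 2 ^ n := by
    calc 4 = 2 ^ 2 := by norm_num
      _ ≤ 2 ^ n := Nat.pow_le_pow_right (by norm_num) hn
  have hP : 2 ^ (n + 1) = 2 * 2 ^ n := by ring
  have hunit {k : ℕ} (hk : Even k) := isUnit_per_eps_append_reflect_of_even (n := n) (by omega) hk
  rcases Nat.even_or_odd i with hi | hi
  · exact ⟨0, by omega, by simpa using hunit hi, hunit (Nat.even_iff.mpr rfl)⟩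
  · set r := i % 2 ^ (n + 1) with hr
    have hr_lt : r < 2 ^ (n + 1) := Nat.mod_lt _ (by positivity)
    have hr_odd : r % 2 = 1 := by
      rw [hr, Nat.mod_mod_of_dvd _ (dvd_pow_self 2 n.succ_ne_zero)]
      exact Nat.odd_iff.mp hi
    have h3 : per (eps n ++ reflect (eps n)) 3 = 1 := by
      rw [per_eps_append_reflect_of_lt (by omega), lam_four]
    obtain ⟨m, hm, hm_even, hmr⟩ : ∃ m, m + 1 < 2 ^ (n + 1) ∧ Even m ∧
        per (eps n ++ reflect (eps n)) (m + r) = 1 := by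
      rcases le_or_gt r 3 with hle | hgt
      · exact ⟨3 - r, by omega, Nat.even_iff.mpr (by omega), by rwa [Nat.sub_add_cancel hle]⟩
      · refine ⟨2 ^ (n + 1) + 3 - r, by omega, Nat.even_iff.mpr (by omega), ?_⟩
        rwa [Nat.sub_add_cancel (by omega), add_comm, ← eps_append_reflect_length n,
          per_add_length]
    refine ⟨m, hm, ?_, hunit hm_even⟩
    rw [← per_add_mod_length, eps_append_reflect_length, ← hr, hmr]
    exact isUnit_one

theorem stmt11_general (n : ℕ) (hn : 3 ≤ n) (i : ℕ) :
    ∃ u, 0 < u ∧ u < 2 ^ (n + 2) ∧ u ≠ 2 ^ (n + 1) ∧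
      (per (eps n ++ reflect (eps n)) ((u - 1) + i),
        per (eps n ++ plusOne (reflect (eps n)) ++ reflect (eps n) ++ eps n)
          (u - 1)) ∈ ({(1, 1), (-1, -1)} : Set (ℤ × ℤ)) := by
  obtain ⟨m, hm, hfst, hsnd⟩ := exists_isUnit_per_eps_append_reflect (by omega : 2 ≤ n) i
  exact exists_diag_of_isUnit hm hfst hsnd

theorem stmt11 (n : ℕ) (hn : 3 ≤ n) (i : ℕ) (hi0 : 0 < i) (hi1 : i < 2 ^ (n + 1)) :
    ∃ u, 0 < u ∧ u < 2 ^ (n + 2) ∧ u ≠ 2 ^ (n + 1) ∧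
      (per (eps n ++ reflect (eps n)) ((u - 1) + i),
        per (eps n ++ plusOne (reflect (eps n)) ++ reflect (eps n) ++ eps n)
          (u - 1)) ∈ ({(1, 1), (-1, -1)} : Set (ℤ × ℤ)) :=
  stmt11_general n hn i

end
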